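/- arXiv:math/0201090 — 6 statements merged into one kernel-verified Lean document; each statement's English description precedes it below -/
import Mathlib

section
/- Let k ≥ 2. Define k×k matrices over ℚ: h₀ with (h₀)_{0,k−1} = 1, (h₀)_{j+1,j} = 1 for 0 ≤ j ≤ k−2, all other entries 0; h∞ with (h∞)_{i,0} = (−1)^i·binomial(k, i+1) for 0 ≤ i ≤ k−1, (h∞)_{i,i+1} = 1 for 0 ≤ i ≤ k−2, all other entries 0; and h₁ with (h₁)_{i,0} = (−1)^{k−1−i}·binomial(k, k−i) for 0 ≤ i ≤ k−1, (h₁)_{i,i} = 1 for 1 ≤ i ≤ k−1, all other entries 0. Then h₀ · h∞ · h₁ = 1; in particular h₁ = (h₀ h∞)⁻¹. -/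
/-- With `h₀`, `hinf`, `h₁` the monodromy matrices (at `ζ = 0, ∞, 1`) of the
hypergeometric equation attached to the quantum cohomology of `CP^{k-1}`, one has
`h₀ * hinf * h₁ = 1`; in particular `h₁ = (h₀ * hinf)⁻¹`. -/
theorem stmt2 (k : ℕ) (hk : 2 ≤ k)
    (h₀ hinf h₁ : Matrix (Fin k) (Fin k) ℚ)
    (hd0 : h₀ = Matrix.of fun i j : Fin k =>
      if (i : ℕ) = (j : ℕ) + 1 then 1
      else if (i : ℕ) = 0 ∧ (j : ℕ) = k - 1 then 1 else 0)
    (hdinf : hinf = Matrix.of fun i j : Fin k =>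
      if (j : ℕ) = 0 then (-1) ^ (i : ℕ) * (k.choose ((i : ℕ) + 1) : ℚ)
      else if (j : ℕ) = (i : ℕ) + 1 then 1 else 0)
    (hd1 : h₁ = Matrix.of fun i j : Fin k =>
      if (j : ℕ) = 0 then (-1) ^ (k - 1 - (i : ℕ)) * (k.choose (k - (i : ℕ)) : ℚ)
      else if i = j then 1 else 0) :
    h₀ * hinf * h₁ = 1 ∧ h₁ = (h₀ * hinf)⁻¹ := by
  haveI : NeZero k := ⟨by omega⟩
  have key : h₀ * hinf * h₁ = 1 := by
    ext i j
    have hik : (i : ℕ) < k := i.isLt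
    have hjk : (j : ℕ) < k := j.isLt
    set p : Fin k := ⟨if (i : ℕ) = 0 then k - 1 else (i : ℕ) - 1, by split <;> omega⟩ with hp
    have hplv : (p : ℕ) = if (i : ℕ) = 0 then k - 1 else (i : ℕ) - 1 := rfl
    have hrow : ∀ l : Fin k, h₀ i l = if l = p then 1 else 0 := by
      intro l
      rw [hd0]
      simp only [Matrix.of_apply, Fin.ext_iff, hplv]
      split_ifs <;> first | rfl | (exfalso; omega)
    have inner : ∀ m : Fin k, (h₀ * hinf) i m = hinf p m := by
      intro m
      rw [Matrix.mul_apply]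
      simp only [hrow, ite_mul, one_mul, zero_mul, Finset.sum_ite_eq', Finset.mem_univ, if_true]
    rw [Matrix.mul_apply]
    simp only [inner]
    by_cases hi : (i : ℕ) = 0
    · -- row 0
      have hB : ∀ m : Fin k, hinf p m = if m = 0 then ((-1 : ℚ)) ^ (k - 1) else 0 := by
        intro m
        rw [hdinf]
        have hm : (m : ℕ) < k := m.isLt
        simp only [Matrix.of_apply, hplv, hi, eq_self_iff_true, if_true]
        have hkk : k - 1 + 1 = k := by omega
        rw [hkk]
        by_cases hm0 : (m : ℕ) = 0
        · rw [if_pos hm0, if_pos (Fin.ext (by simpa using hm0) : m = 0),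
            Nat.choose_self, Nat.cast_one, mul_one]
        · have h1 : m ≠ 0 := by intro h; apply hm0; rw [h]; simp
          rw [if_neg hm0, if_neg (by omega : ¬(m : ℕ) = k), if_neg h1]
      simp only [hB, ite_mul, zero_mul, Finset.sum_ite_eq', Finset.mem_univ, if_true]
      rw [hd1]
      simp only [Matrix.of_apply, Fin.val_zero]
      by_cases hj : (j : ℕ) = 0
      · rw [if_pos hj, Matrix.one_apply, if_pos (Fin.ext (by omega) : i = j)]
        simp only [Nat.sub_zero, Nat.choose_self, Nat.cast_one, mul_one]
        rw [← pow_add]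
        exact Even.neg_one_pow ⟨k - 1, rfl⟩
      · have h0j : (0 : Fin k) ≠ j := by intro h; apply hj; rw [← h]; simp
        rw [if_neg hj, if_neg h0j, mul_zero, Matrix.one_apply,
          if_neg (by intro h; apply hj; omega : i ≠ j)]
    · -- rows i ≥ 1
      have hB : ∀ m : Fin k, hinf p m =
          (if m = 0 then ((-1 : ℚ)) ^ ((i : ℕ) - 1) * (k.choose (i : ℕ) : ℚ) else 0)
          + (if m = i then 1 else 0) := by
        intro m
        rw [hdinf]
        have hm : (m : ℕ) < k := m.isLt
        simp only [Matrix.of_apply, hplv, if_neg hi]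
        have h2 : (i : ℕ) - 1 + 1 = (i : ℕ) := by omega
        rw [h2]
        by_cases hm0 : (m : ℕ) = 0
        · rw [if_pos hm0, if_pos (Fin.ext (by simpa using hm0) : m = 0),
            if_neg (by intro h; apply hi; rw [← h]; exact hm0 : m ≠ i), add_zero]
        · have h1 : m ≠ 0 := by intro h; apply hm0; rw [h]; simp
          rw [if_neg hm0, if_neg h1, zero_add]
          by_cases hmi : m = i
          · rw [if_pos (by rw [hmi] : (m : ℕ) = (i : ℕ)), if_pos hmi]
          · rw [if_neg (by rw [Fin.ext_iff] at hmi; exact hmi), if_neg hmi]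
      simp only [hB, add_mul, Finset.sum_add_distrib, ite_mul, zero_mul, one_mul,
        Finset.sum_ite_eq', Finset.mem_univ, if_true]
      rw [hd1]
      simp only [Matrix.of_apply, Fin.val_zero]
      by_cases hj : (j : ℕ) = 0
      · rw [if_pos hj, if_pos hj, Matrix.one_apply, if_neg (by intro h; apply hi; omega : i ≠ j)]
        simp only [Nat.sub_zero, Nat.choose_self, Nat.cast_one, mul_one]
        rw [Nat.choose_symm (le_of_lt hik)]
        have hsg : ((-1 : ℚ)) ^ ((i : ℕ) - 1) * (-1) ^ (k - 1)
            = -((-1 : ℚ)) ^ (k - 1 - (i : ℕ)) := by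
          rw [← pow_add,
            (by omega : (i : ℕ) - 1 + (k - 1) = (k - 1 - (i : ℕ)) + (2 * ((i : ℕ) - 1) + 1))]
          simp [pow_add, pow_mul]
        linear_combination (k.choose (i : ℕ) : ℚ) * hsg
      · have h0j : (0 : Fin k) ≠ j := by intro h; apply hj; rw [← h]; simp
        rw [if_neg hj, if_neg hj, if_neg h0j, mul_zero, zero_add, Matrix.one_apply]
  exact ⟨key, (Matrix.inv_eq_right_inv key).symm⟩
end

section
/- Let k ≥ 2. Define k×k matrices over ℝ: h₀ with (h₀)_{0,k−1} = 1, (h₀)_{j+1,j} = 1 for 0 ≤ j ≤ k−2, all other entries 0; h∞ with (h∞)_{i,0} = (−1)^i·binomial(k, i+1) for 0 ≤ i ≤ k−1, (h∞)_{i,i+1} = 1 for 0 ≤ i ≤ k−2, all other entries 0. Then the real vector space of k×k real matrices X satisfying h₀ · X · h₀ᵀ = X and h∞ · X · h∞ᵀ = X (the space of quadratic invariants of the hypergeometric group generated by h₀ and h∞) has dimension at most 1. -/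
/-!
Invariance under the cyclic shift `h₀` makes `X` circulant, `X i j = X 0 (j - i)`, so `X` is
determined by its first row. The rows of `hinf` are `v i • e₀ + e_{i+1}`, and `v (k-1) • e₀` for
the last one, with all `v i ≠ 0`. Comparing the entries `(k-1, 0)` and `(k-2, j)` of
`hinf * X * hinfᵀ = X` shows that the first row vanishes as soon as `X 0 1` does, so `X ↦ X 0 1`
is injective on the invariants.
-/

open Matrix

def quadraticInvariants (k : ℕ) (h₀ hinf : Matrix (Fin k) (Fin k) ℝ) :
    Submodule ℝ (Matrix (Fin k) (Fin k) ℝ) where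
  carrier := {X | h₀ * X * h₀ᵀ = X ∧ hinf * X * hinfᵀ = X}
  add_mem' := by
    rintro X Y ⟨hX0, hXinf⟩ ⟨hY0, hYinf⟩
    constructor <;>
      simp [Matrix.mul_add, Matrix.add_mul, hX0, hXinf, hY0, hYinf]
  zero_mem' := by simp
  smul_mem' := by
    rintro c X ⟨hX0, hXinf⟩
    constructor <;>
      simp [Matrix.mul_smul, Matrix.smul_mul, hX0, hXinf]

universe u

theorem Submodule.rank_le_one_of_eq_zero_of_apply_eq_zero {R V : Type u} [Ring R]
    [StrongRankCondition R] [AddCommGroup V] [Module R V] (S : Submodule R V) (f : V →ₗ[R] R)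
    (hf : ∀ x ∈ S, f x = 0 → x = 0) : Module.rank R S ≤ 1 := by
  refine (LinearMap.rank_le_of_injective (f ∘ₗ S.subtype) ?_).trans_eq (Module.rank_self R)
  rw [← LinearMap.ker_eq_bot, LinearMap.ker_eq_bot']
  exact fun x hx => Subtype.ext (hf x x.2 hx)

namespace Matrix

variable {R : Type*} {n : ℕ}

theorem mul_mul_transpose_apply [NonUnitalNonAssocSemiring R] {m l o : Type*} [Fintype l]
    [Fintype o] (A : Matrix m l R) (X : Matrix l o R) (B : Matrix m o R) (a b : m) :
    (A * X * Bᵀ) a b = (A a ᵥ* X) ⬝ᵥ B b := rfl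

theorem apply_add_one_add_one_of_mul_mul_transpose_eq [NonAssocSemiring R] [NeZero n]
    {S X : Matrix (Fin n) (Fin n) R} (hS : ∀ i, S (i + 1) = Pi.single i 1) (h : S * X * Sᵀ = X)
    (i j : Fin n) :
    X (i + 1) (j + 1) = X i j := by
  rw [← congr_fun₂ h, mul_mul_transpose_apply, hS, hS, single_one_vecMul, dotProduct_single_one,
    row_apply]

open Fin.NatCast in
theorem apply_eq_apply_zero_sub_of_apply_add_one_add_one [NeZero n] {X : Matrix (Fin n) (Fin n) R}
    (hX : ∀ i j, X (i + 1) (j + 1) = X i j) (i j : Fin n) : X i j = X 0 (j - i) := by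
  have hshift : ∀ (m : ℕ) i j, X (i + m) (j + m) = X i j := by
    intro m
    induction m with
    | zero => simp
    | succ m ih => intro i j; rw [Nat.cast_succ, ← add_assoc, ← add_assoc, hX, ih]
  simpa [sub_eq_add_neg] using (hshift (-i : Fin n).val i j).symm

variable [CommRing R] [NoZeroDivisors R]

theorem eq_zero_of_mul_mul_transpose_eq {H X : Matrix (Fin (n + 2)) (Fin (n + 2)) R}
    {v : Fin (n + 2) → R} (hv : ∀ i, v i ≠ 0)
    (hH : ∀ i : Fin (n + 1), H i.castSucc = v i.castSucc • Pi.single 0 1 + Pi.single i.succ 1)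
    (hH_last : H (Fin.last _) = v (Fin.last _) • Pi.single 0 1)
    (hX : ∀ i j, X (i + 1) (j + 1) = X i j) (h : H * X * Hᵀ = X) (h01 : X 0 1 = 0) : X = 0 := by
  have hlast0 : X (Fin.last _) 0 = 0 := by
    rw [← hX, Fin.last_add_one, zero_add, h01]
  have h00 : X 0 0 = 0 := by
    have e := congr_fun₂ h (Fin.last _) 0
    rw [mul_mul_transpose_apply, hH_last, ← Fin.castSucc_zero, hH] at e
    simp only [smul_vecMul, single_one_vecMul, dotProduct_add, dotProduct_smul,
      dotProduct_single_one, Pi.smul_apply, row_apply, smul_eq_mul, Fin.castSucc_zero,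
      Fin.succ_zero_eq_one, h01, hlast0] at e
    simpa [hv] using e
  have hsucc : ∀ j : Fin (n + 1), X 0 j.succ = 0 := by
    intro j
    have e := congr_fun₂ h (Fin.last n).castSucc j.castSucc
    rw [mul_mul_transpose_apply, hH, hH, ← hX] at e
    simp only [add_vecMul, smul_vecMul, single_one_vecMul, dotProduct_add, dotProduct_smul,
      dotProduct_single_one, Pi.add_apply, Pi.smul_apply, row_apply, smul_eq_mul, Fin.succ_last,
      Fin.coeSucc_eq_succ, h00, hlast0] at e
    simpa [hv] using e
  ext i j
  rw [apply_eq_apply_zero_sub_of_apply_add_one_add_one hX]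
  rcases Fin.eq_zero_or_eq_succ (j - i) with hji | ⟨j', hji⟩ <;> simp [hji, h00, hsucc]

end Matrix

/-- For `k ≥ 2`, with `h₀`, `hinf` the monodromy matrices of the hypergeometric
equation, the real vector space of `k × k` real matrices `X` satisfying
`h₀ * X * h₀ᵀ = X` and `hinf * X * hinfᵀ = X` has dimension at most `1`. -/
theorem stmt5 (k : ℕ) (hk : 2 ≤ k)
    (h₀ hinf : Matrix (Fin k) (Fin k) ℝ)
    (hd0 : h₀ = Matrix.of fun i j : Fin k =>
      if (i : ℕ) = (j : ℕ) + 1 then 1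
      else if (i : ℕ) = 0 ∧ (j : ℕ) = k - 1 then 1 else 0)
    (hdinf : hinf = Matrix.of fun i j : Fin k =>
      if (j : ℕ) = 0 then (-1) ^ (i : ℕ) * (k.choose ((i : ℕ) + 1) : ℝ)
      else if (j : ℕ) = (i : ℕ) + 1 then 1 else 0) :
    Module.rank ℝ (quadraticInvariants k h₀ hinf) ≤ 1 := by
  obtain ⟨n, rfl⟩ : ∃ n, k = n + 2 := ⟨k - 2, by omega⟩
  set v : Fin (n + 2) → ℝ := fun i => (-1) ^ (i : ℕ) * ((n + 2).choose (i + 1) : ℝ)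
  have hv (i : Fin (n + 2)) : v i ≠ 0 :=
    mul_ne_zero (by simp) (Nat.cast_ne_zero.2 (Nat.choose_pos i.isLt).ne')
  have h₀_row (i : Fin (n + 2)) : h₀ (i + 1) = Pi.single i 1 := by
    ext j
    simp only [hd0, of_apply, Pi.single_apply, Fin.ext_iff, Fin.val_add_one, Fin.val_last]
    split_ifs <;> simp_all
  have hinf_row (i : Fin (n + 1)) :
      hinf i.castSucc = v i.castSucc • Pi.single 0 1 + Pi.single i.succ 1 := by
    ext j
    simp only [hdinf, v, of_apply, Pi.add_apply, Pi.smul_apply, Pi.single_apply, Fin.ext_iff,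
      Fin.val_zero, Fin.val_castSucc, Fin.val_succ]
    split_ifs <;> simp_all
  have hinf_last : hinf (Fin.last _) = v (Fin.last _) • Pi.single 0 1 := by
    ext j
    simp only [hdinf, v, of_apply, Pi.smul_apply, Pi.single_apply, Fin.ext_iff, Fin.val_zero,
      Fin.val_last]
    split_ifs <;> simp_all
    omega
  refine Submodule.rank_le_one_of_eq_zero_of_apply_eq_zero _ (entryLinearMap ℝ ℝ 0 1) ?_
  rintro X ⟨h₀X, hinfX⟩ h01
  exact eq_zero_of_mul_mul_transpose_eq hv hinf_row hinf_last
    (apply_add_one_add_one_of_mul_mul_transpose_eq h₀_row h₀X) hinfX h01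
end

section
/- Let k ≥ 1 and let G be a symmetric k×k real matrix all of whose diagonal entries equal 2. Let S be the upper triangular k×k matrix with S_{ii} = 1, S_{ij} = G_{ij} for i < j, and S_{ij} = 0 for i > j, so that S + Sᵀ = G. For 0 ≤ j ≤ k−1 set R_j = 1 − G·E_{jj}, where E_{jj} is the matrix with 1 in position (j,j) and 0 elsewhere. Then the composition of all the pseudo-reflexions gives the Seifert form: R_{k−1} · R_{k−2} ⋯ R_1 · R_0 = −S · (Sᵀ)⁻¹. -/
/-!
Write `L` for the lower unitriangular matrix agreeing with `G` strictly below the diagonal, and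
`D m` for the diagonal projection onto the first `m` coordinates. The partial products satisfy
`(R_{m-1} ⋯ R_0) L = L - G D m`: the inductive step only needs row `m` of `L - G D m` to be the
`m`-th unit row, which holds because `L` and `G D m` cancel strictly below the diagonal. For
`m = k` this gives `(R_{k-1} ⋯ R_0) L = L - G`, and when `G = S + Sᵀ` with `L = Sᵀ` this is `-S`.
-/

open Matrix

namespace Matrix

variable {α : Type*} [CommRing α] {k : ℕ}

def gramReflection (G : Matrix (Fin k) (Fin k) α) (j : Fin k) : Matrix (Fin k) (Fin k) α :=
  1 - G * single j j 1

def lowerUnitriangular (G : Matrix (Fin k) (Fin k) α) : Matrix (Fin k) (Fin k) α :=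
  of fun i j => if j < i then G i j else if i = j then 1 else 0

def projFirst (k m : ℕ) : Matrix (Fin k) (Fin k) α :=
  diagonal fun j => if (j : ℕ) < m then 1 else 0

theorem projFirst_zero : (projFirst k 0 : Matrix (Fin k) (Fin k) α) = 0 := by
  simp [projFirst]

theorem projFirst_succ {m : ℕ} (hm : m < k) :
    (projFirst k (m + 1) : Matrix (Fin k) (Fin k) α) =
      projFirst k m + single ⟨m, hm⟩ ⟨m, hm⟩ 1 := by
  rw [projFirst, projFirst, ← diagonal_single, diagonal_add]
  congr 1
  ext i
  simp only [Pi.single_apply, Fin.ext_iff]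
  split_ifs <;> first | (exfalso; omega) | simp

theorem projFirst_of_le {m : ℕ} (h : k ≤ m) : (projFirst k m : Matrix (Fin k) (Fin k) α) = 1 := by
  simp [projFirst, fun j : Fin k => j.isLt.trans_le h]

theorem single_mul_lowerUnitriangular_sub (G : Matrix (Fin k) (Fin k) α) (i : Fin k) :
    single i i 1 * (lowerUnitriangular G - G * projFirst k i) = single i i 1 := by
  ext a b
  by_cases ha : a = i
  · subst ha
    rcases lt_trichotomy b a with h | rfl | h
    · simp [lowerUnitriangular, projFirst, mul_diagonal, h, h.ne']
    · simp [lowerUnitriangular, projFirst, mul_diagonal]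
    · simp [lowerUnitriangular, projFirst, mul_diagonal, h.not_gt, h.ne]
  · simp [ha, single_apply_of_row_ne (Ne.symm ha)]

theorem prod_take_gramReflection_mul (G : Matrix (Fin k) (Fin k) α) {m : ℕ} (hm : m ≤ k) :
    (((List.finRange k).take m).reverse.map (gramReflection G)).prod * lowerUnitriangular G =
      lowerUnitriangular G - G * projFirst k m := by
  induction m with
  | zero => simp [projFirst_zero]
  | succ m ih =>
    have hmk : m < k := hm
    have htake : (List.finRange k).take (m + 1) = (List.finRange k).take m ++ [⟨m, hmk⟩] := by
      simp [List.take_add_one, hmk]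
    rw [htake, List.reverse_append, List.map_append, List.prod_append, List.reverse_singleton,
      List.map_singleton, List.prod_singleton, mul_assoc, ih hmk.le, gramReflection, sub_mul,
      one_mul, mul_assoc, single_mul_lowerUnitriangular_sub, projFirst_succ hmk, mul_add]
    abel

theorem prod_gramReflection_mul_lowerUnitriangular (G : Matrix (Fin k) (Fin k) α) :
    ((List.finRange k).reverse.map (gramReflection G)).prod * lowerUnitriangular G =
      lowerUnitriangular G - G := by
  have h := prod_take_gramReflection_mul G le_rfl
  rwa [List.take_of_length_le (by simp), projFirst_of_le le_rfl, mul_one] at h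

theorem det_lowerUnitriangular (G : Matrix (Fin k) (Fin k) α) :
    (lowerUnitriangular G).det = 1 := by
  rw [det_of_isLowerTriangular _ fun i j (h : i < j) => by
    simp [lowerUnitriangular, h.not_gt, h.ne]]
  simp [lowerUnitriangular]

theorem prod_gramReflection (G : Matrix (Fin k) (Fin k) α) :
    ((List.finRange k).reverse.map (gramReflection G)).prod =
      (lowerUnitriangular G - G) * (lowerUnitriangular G)⁻¹ := by
  rw [← prod_gramReflection_mul_lowerUnitriangular, mul_nonsing_inv_cancel_right]
  simp [det_lowerUnitriangular]

end Matrix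

theorem stmt8_general (k : ℕ)
    (G : Matrix (Fin k) (Fin k) ℝ)
    (hsym : G.IsSymm) (hdiag : ∀ i, G i i = 2)
    (S : Matrix (Fin k) (Fin k) ℝ)
    (hS : S = Matrix.of fun i j : Fin k =>
      if i = j then 1 else if i < j then G i j else 0)
    (R : Fin k → Matrix (Fin k) (Fin k) ℝ)
    (hR : ∀ j, R j = 1 - G * Matrix.single j j 1) :
    ((List.finRange k).reverse.map R).prod = -(S * (Sᵀ)⁻¹) := by
  have hL : Sᵀ = lowerUnitriangular G := by
    ext i j
    rcases lt_trichotomy i j with h | rfl | h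
    · simp [hS, lowerUnitriangular, h.ne, h.ne', h.not_gt]
    · simp [hS, lowerUnitriangular]
    · simp [hS, lowerUnitriangular, h, h.ne, hsym.apply]
  have hG : Sᵀ - G = -S := by
    ext i j
    rcases lt_trichotomy i j with h | rfl | h
    · simp [hS, h, h.ne, h.ne', h.not_gt]
    · simp [hS, hdiag]
      norm_num
    · simp [hS, h, h.ne, h.ne', h.not_gt, hsym.apply]
  rw [show R = gramReflection G from funext hR, prod_gramReflection, ← hL, hG, neg_mul]

/-- Let `G` be a symmetric real `k × k` matrix with diagonal entries `2`, and
let `S` be upper triangular with unit diagonal and `S i j = G i j` for `i < j`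
(so `S + Sᵀ = G`). With `R j = 1 - G * E_{jj}`, the composition of all the
pseudo-reflexions gives the Seifert form: `R_{k-1} ⋯ R_0 = -S * (Sᵀ)⁻¹`. -/
theorem stmt8 (k : ℕ) (hk : 1 ≤ k)
    (G : Matrix (Fin k) (Fin k) ℝ)
    (hsym : G.IsSymm) (hdiag : ∀ i, G i i = 2)
    (S : Matrix (Fin k) (Fin k) ℝ)
    (hS : S = Matrix.of fun i j : Fin k =>
      if i = j then 1 else if i < j then G i j else 0)
    (R : Fin k → Matrix (Fin k) (Fin k) ℝ)
    (hR : ∀ j, R j = 1 - G * Matrix.single j j 1) :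
    ((List.finRange k).reverse.map R).prod = -(S * (Sᵀ)⁻¹) :=
  stmt8_general k G hsym hdiag S hS R hR
end

section
/- Let k ≥ 1 and let G be an antisymmetric k×k real matrix (Gᵀ = −G). Let S be the upper triangular k×k matrix with S_{ii} = 1, S_{ij} = −G_{ij} for i < j, and S_{ij} = 0 for i > j, so that Sᵀ − S = G. For 0 ≤ j ≤ k−1 set R_j = 1 − G·E_{jj}, where E_{jj} is the matrix with 1 in position (j,j) and 0 elsewhere. Then the composition of all the pseudo-reflexions gives the Seifert form: R_{k−1} · R_{k−2} ⋯ R_1 · R_0 = S · (Sᵀ)⁻¹. -/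
/-!
Let `L` be the unitriangular matrix agreeing with `G` strictly below the diagonal and `D_m` the
diagonal projection onto the first `m` coordinates. Row `m` of `L - G D_m` is the `m`-th unit row,
so `E_mm (L - G D_m) = E_mm` and therefore `R_m (L - G D_m) = L - G D_{m+1}`. Inductively
`R_{k-1} ⋯ R_0 L = L - G`, and for antisymmetric `G` we have `L = Sᵀ`, `L - G = S`, `det L = 1`.
-/

open Matrix

namespace Matrix

variable {α : Type*} {k : ℕ}

section Ring

variable [Ring α] (G : Matrix (Fin k) (Fin k) α)

def pseudoReflexion (j : Fin k) : Matrix (Fin k) (Fin k) α :=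
  1 - G * single j j 1

def unitLowerTriangularPart : Matrix (Fin k) (Fin k) α :=
  of fun i j => if i = j then 1 else if j < i then G i j else 0

def prefixProjection (k m : ℕ) : Matrix (Fin k) (Fin k) α :=
  diagonal fun i => if (i : ℕ) < m then 1 else 0

theorem mul_prefixProjection_apply (m : ℕ) (i j : Fin k) :
    (G * prefixProjection k m : Matrix (Fin k) (Fin k) α) i j =
      if (j : ℕ) < m then G i j else 0 := by
  simp [prefixProjection, mul_diagonal]

theorem prefixProjection_succ (e : Fin k) :
    prefixProjection k (e + 1) = prefixProjection k e + (single e e 1 : Matrix _ _ α) := by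
  ext i j
  simp only [prefixProjection, add_apply, diagonal_apply, single_apply]
  split_ifs <;> simp_all [Fin.ext_iff] <;> omega

theorem unitLowerTriangularPart_sub_mul_prefixProjection_apply_self (e j : Fin k) :
    (unitLowerTriangularPart G - G * prefixProjection k e : Matrix (Fin k) (Fin k) α) e j =
      if e = j then 1 else 0 := by
  rw [sub_apply, mul_prefixProjection_apply]
  rcases lt_trichotomy j e with h | rfl | h
  · simp [unitLowerTriangularPart, h, h.ne']
  · simp [unitLowerTriangularPart]
  · simp [unitLowerTriangularPart, h.ne, not_lt.2 h.le]

theorem single_mul_unitLowerTriangularPart_sub_mul_prefixProjection (e : Fin k) :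
    single e e 1 * (unitLowerTriangularPart G - G * prefixProjection k e) = single e e 1 := by
  ext i j
  by_cases hi : i = e
  · subst hi
    rw [single_mul_apply_same, unitLowerTriangularPart_sub_mul_prefixProjection_apply_self]
    simp [single_apply]
  · rw [single_mul_apply_of_ne _ _ _ _ _ hi]
    simp [Ne.symm hi]

theorem pseudoReflexion_mul_unitLowerTriangularPart_sub_mul_prefixProjection (e : Fin k) :
    pseudoReflexion G e * (unitLowerTriangularPart G - G * prefixProjection k e) =
      unitLowerTriangularPart G - G * prefixProjection k (e + 1) := by
  rw [pseudoReflexion, sub_mul, one_mul, mul_assoc,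
    single_mul_unitLowerTriangularPart_sub_mul_prefixProjection, prefixProjection_succ, mul_add]
  abel

theorem prod_take_pseudoReflexion_mul_unitLowerTriangularPart {m : ℕ} (hm : m ≤ k) :
    (((List.finRange k).take m).reverse.map (pseudoReflexion G)).prod *
        unitLowerTriangularPart G =
      unitLowerTriangularPart G - G * prefixProjection k m := by
  induction m with
  | zero => simp [prefixProjection]
  | succ m ih =>
    have hmk : m < k := hm
    rw [List.take_add_one, List.getElem?_eq_getElem (by simpa using hmk)]
    simp only [Option.toList_some, List.reverse_append, List.reverse_singleton,
      List.singleton_append, List.map_cons, List.prod_cons, List.getElem_finRange, mul_assoc,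
      ih hmk.le]
    exact pseudoReflexion_mul_unitLowerTriangularPart_sub_mul_prefixProjection G ⟨m, hmk⟩

theorem prod_pseudoReflexion_mul_unitLowerTriangularPart :
    ((List.finRange k).reverse.map (pseudoReflexion G)).prod * unitLowerTriangularPart G =
      unitLowerTriangularPart G - G := by
  have hfull : (prefixProjection k k : Matrix (Fin k) (Fin k) α) = 1 := by
    simp [prefixProjection]
  have h := prod_take_pseudoReflexion_mul_unitLowerTriangularPart G (le_refl k)
  rwa [List.take_of_length_le (by simp), hfull, mul_one] at h

end Ring

section CommRing

variable [CommRing α] (G : Matrix (Fin k) (Fin k) α)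

theorem det_unitLowerTriangularPart : (unitLowerTriangularPart G).det = 1 := by
  rw [det_of_isLowerTriangular _ fun i j hij => ?_]
  · simp [unitLowerTriangularPart]
  · have hij : i < j := hij
    simp [unitLowerTriangularPart, hij.ne, not_lt.2 hij.le]

end CommRing

section Skew

variable [Ring α] {G : Matrix (Fin k) (Fin k) α}

theorem transpose_unitLowerTriangularPart_of_transpose_eq_neg (hG : Gᵀ = -G) :
    (unitLowerTriangularPart G)ᵀ =
      of fun i j => if i = j then 1 else if i < j then -G i j else 0 := by
  ext i j
  have hji : G j i = -G i j := by simpa using congr_fun₂ hG i j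
  simp [unitLowerTriangularPart, eq_comm, hji]

theorem unitLowerTriangularPart_sub_eq_transpose (hG : Gᵀ = -G) (hdiag : ∀ i, G i i = 0) :
    unitLowerTriangularPart G - G = (unitLowerTriangularPart G)ᵀ := by
  ext i j
  rcases lt_trichotomy i j with h | rfl | h
  · have hji : G j i = -G i j := by simpa using congr_fun₂ hG i j
    simp [unitLowerTriangularPart, h.ne, h.ne', not_lt.2 h.le, h, hji]
  · simp [unitLowerTriangularPart, hdiag]
  · simp [unitLowerTriangularPart, h.ne, h.ne', not_lt.2 h.le, h]

end Skew

end Matrix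

theorem stmt9_general (k : ℕ)
    (G : Matrix (Fin k) (Fin k) ℝ)
    (hanti : Gᵀ = -G)
    (S : Matrix (Fin k) (Fin k) ℝ)
    (hS : S = Matrix.of fun i j : Fin k =>
      if i = j then 1 else if i < j then -G i j else 0)
    (R : Fin k → Matrix (Fin k) (Fin k) ℝ)
    (hR : ∀ j, R j = 1 - G * Matrix.single j j 1) :
    ((List.finRange k).reverse.map R).prod = S * (Sᵀ)⁻¹ := by
  obtain rfl : R = pseudoReflexion G := funext hR
  have hdiag (i : Fin k) : G i i = 0 := self_eq_neg.mp (congr_fun₂ hanti i i)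
  rw [hS, ← transpose_unitLowerTriangularPart_of_transpose_eq_neg hanti, transpose_transpose,
    ← unitLowerTriangularPart_sub_eq_transpose hanti hdiag,
    ← prod_pseudoReflexion_mul_unitLowerTriangularPart,
    mul_nonsing_inv_cancel_right _ _ (by simp [det_unitLowerTriangularPart])]

/-- Let `G` be an antisymmetric real `k × k` matrix, and let `S` be upper
triangular with unit diagonal and `S i j = -G i j` for `i < j` (so `Sᵀ - S = G`).
With `R j = 1 - G * E_{jj}`, the composition of all the pseudo-reflexions gives the
Seifert form: `R_{k-1} ⋯ R_0 = S * (Sᵀ)⁻¹`. -/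
theorem stmt9 (k : ℕ) (hk : 1 ≤ k)
    (G : Matrix (Fin k) (Fin k) ℝ)
    (hanti : Gᵀ = -G)
    (S : Matrix (Fin k) (Fin k) ℝ)
    (hS : S = Matrix.of fun i j : Fin k =>
      if i = j then 1 else if i < j then -G i j else 0)
    (R : Fin k → Matrix (Fin k) (Fin k) ℝ)
    (hR : ∀ j, R j = 1 - G * Matrix.single j j 1) :
    ((List.finRange k).reverse.map R).prod = S * (Sᵀ)⁻¹ :=
  stmt9_general k G hanti S hS R hR
end

section
/- Let k ≥ 1 and let G be an invertible symmetric k×k real matrix all of whose diagonal entries equal 2. Let S be the upper triangular k×k matrix with S_{ii} = 1, S_{ij} = G_{ij} for i < j, and S_{ij} = 0 for i > j, so that S + Sᵀ = G. For 0 ≤ j ≤ k−1 set R_j = 1 − G·E_{jj}, where E_{jj} is the matrix with 1 in position (j,j) and 0 elsewhere, and let R = R_{k−1} · R_{k−2} ⋯ R_1 · R_0. Then 1 − R is invertible and (1 − R)⁻¹ · G = Sᵀ; i.e. the Stokes matrix S can be recovered from the Gram matrix G and the composed monodromy R. -/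
/-!
Write `L = Sᵀ` and let `Pₜ` be the projection onto the first `t` coordinates. By induction on
`t`, `R_{t-1} ⋯ R_0 L = L - G Pₜ`: since `R_t = 1 - G E_{tt}`, the inductive step amounts to
`E_{tt} (L - G Pₜ) = E_{tt}`, i.e. row `t` of `L` agrees with row `t` of `G` strictly left of the
diagonal, which is the symmetry of `G`. At `t = k` this reads `(1 - R) L = G`, and `det L = 1`.
-/

open Matrix

namespace Matrix

variable {α : Type*} {k : ℕ}

def stokes [Zero α] [One α] (G : Matrix (Fin k) (Fin k) α) : Matrix (Fin k) (Fin k) α :=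
  of fun i j => if i = j then 1 else if i < j then G i j else 0

theorem det_stokes [CommRing α] (G : Matrix (Fin k) (Fin k) α) : (stokes G).det = 1 := by
  rw [det_of_isUpperTriangular]
  · simp [stokes]
  · intro i j (hij : j < i)
    simp [stokes, hij.ne', hij.not_gt]

section Ring

variable [Ring α]

def pseudoReflection (G : Matrix (Fin k) (Fin k) α) (j : Fin k) : Matrix (Fin k) (Fin k) α :=
  1 - G * single j j 1

def prefixProj (t : ℕ) : Matrix (Fin k) (Fin k) α :=
  diagonal fun i => if (i : ℕ) < t then 1 else 0

theorem prefixProj_add_one (t : Fin k) :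
    prefixProj (t + 1) = prefixProj t + single t t (1 : α) := by
  ext i j
  by_cases hij : i = j
  · subst hij
    rcases lt_trichotomy i t with h | rfl | h
    · simp [prefixProj, h, h.le, h.ne']
    · simp [prefixProj]
    · simp [prefixProj, h.not_ge, h.not_gt, h.ne]
  · simp [prefixProj, hij, single_apply]
    omega

theorem single_mul_stokes_transpose_sub {G : Matrix (Fin k) (Fin k) α} (hG : G.IsSymm)
    (t : Fin k) : single t t 1 * ((stokes G)ᵀ - G * prefixProj t) = single t t 1 := by
  ext i j
  by_cases hi : i = t
  · subst hi
    rw [single_mul_apply_same, one_mul]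
    rcases lt_trichotomy j i with h | rfl | h
    · simp [stokes, prefixProj, h, h.ne, h.ne', hG.apply i j]
    · simp [stokes, prefixProj]
    · simp [stokes, prefixProj, h.ne, h.ne', h.not_gt]
  · rw [single_mul_apply_of_ne _ _ _ _ _ hi, single_apply_of_ne _ _ _ _ _ (fun h => hi h.1.symm)]

theorem prod_take_pseudoReflection_mul_stokes_transpose {G : Matrix (Fin k) (Fin k) α}
    (hG : G.IsSymm) {t : ℕ} (ht : t ≤ k) :
    (((List.finRange k).take t).reverse.map (pseudoReflection G)).prod * (stokes G)ᵀ =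
      (stokes G)ᵀ - G * prefixProj t := by
  induction t with
  | zero => simp [prefixProj]
  | succ t ih =>
    set j : Fin k := ⟨t, ht⟩
    have htake : (List.finRange k).take (t + 1) = (List.finRange k).take t ++ [j] := by
      rw [List.take_add_one, List.getElem?_eq_getElem (by simpa using ht)]
      simp [j]
    rw [htake, List.reverse_append, List.map_append, List.prod_append, List.reverse_singleton,
      List.map_singleton, List.prod_singleton, Matrix.mul_assoc, ih (Nat.le_of_succ_le ht),
      show t + 1 = (j : ℕ) + 1 from rfl, prefixProj_add_one, pseudoReflection]
    calc (1 - G * single j j 1) * ((stokes G)ᵀ - G * prefixProj j)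
        = (stokes G)ᵀ - G * prefixProj j -
            G * (single j j 1 * ((stokes G)ᵀ - G * prefixProj j)) := by
          noncomm_ring
      _ = (stokes G)ᵀ - G * (prefixProj j + single j j 1) := by
          rw [single_mul_stokes_transpose_sub hG]
          noncomm_ring

theorem prod_pseudoReflection_mul_stokes_transpose {G : Matrix (Fin k) (Fin k) α}
    (hG : G.IsSymm) :
    ((List.finRange k).reverse.map (pseudoReflection G)).prod * (stokes G)ᵀ = (stokes G)ᵀ - G := by
  have hproj : prefixProj k = (1 : Matrix (Fin k) (Fin k) α) := by simp [prefixProj]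
  have h := prod_take_pseudoReflection_mul_stokes_transpose hG le_rfl
  rwa [List.take_of_length_le (by simp), hproj, Matrix.mul_one] at h

end Ring

end Matrix

theorem stmt10_general (k : ℕ)
    (G : Matrix (Fin k) (Fin k) ℝ)
    (hGunit : IsUnit G)
    (hsym : G.IsSymm)
    (S : Matrix (Fin k) (Fin k) ℝ)
    (hS : S = Matrix.of fun i j : Fin k =>
      if i = j then 1 else if i < j then G i j else 0)
    (R : Fin k → Matrix (Fin k) (Fin k) ℝ)
    (hR : ∀ j, R j = 1 - G * Matrix.single j j 1)
    (P : Matrix (Fin k) (Fin k) ℝ)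
    (hP : P = ((List.finRange k).reverse.map R).prod) :
    IsUnit (1 - P) ∧ (1 - P)⁻¹ * G = Sᵀ := by
  obtain rfl : S = stokes G := hS
  obtain rfl : R = pseudoReflection G := funext hR
  have hPS : (1 - P) * (stokes G)ᵀ = G := by
    rw [sub_mul, one_mul, hP, prod_pseudoReflection_mul_stokes_transpose hsym, sub_sub_cancel]
  have hdet : (1 - P).det = G.det := by
    simpa [det_transpose, det_stokes] using congrArg det hPS
  have hunit : IsUnit (1 - P) := by
    rw [isUnit_iff_isUnit_det, hdet, ← isUnit_iff_isUnit_det]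
    exact hGunit
  refine ⟨hunit, ?_⟩
  rw [← nonsing_inv_mul_cancel_left (1 - P) (stokes G)ᵀ ((isUnit_iff_isUnit_det _).1 hunit), hPS]

/-- Let `G` be an invertible symmetric real `k × k` matrix with diagonal
entries `2`, let `S` be upper triangular with unit diagonal and `S i j = G i j` for
`i < j`, let `R j = 1 - G * E_{jj}` and `R = R_{k-1} ⋯ R_0`. Then `1 - R` is invertible
and `(1 - R)⁻¹ * G = Sᵀ`. -/
theorem stmt10 (k : ℕ) (hk : 1 ≤ k)
    (G : Matrix (Fin k) (Fin k) ℝ)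
    (hGunit : IsUnit G)
    (hsym : G.IsSymm) (hdiag : ∀ i, G i i = 2)
    (S : Matrix (Fin k) (Fin k) ℝ)
    (hS : S = Matrix.of fun i j : Fin k =>
      if i = j then 1 else if i < j then G i j else 0)
    (R : Fin k → Matrix (Fin k) (Fin k) ℝ)
    (hR : ∀ j, R j = 1 - G * Matrix.single j j 1)
    (P : Matrix (Fin k) (Fin k) ℝ)
    (hP : P = ((List.finRange k).reverse.map R).prod) :
    IsUnit (1 - P) ∧ (1 - P)⁻¹ * G = Sᵀ :=
  stmt10_general k G hGunit hsym S hS R hR P hP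
end

section
/- Let k ≥ 1 and let θ denote the operator on formal power series over ℚ given by θ(G) = X·G′. Suppose F ∈ ℚ⟦X⟧ satisfies θ^k F = X · (kθ+1)(kθ+2)⋯(kθ+k) F and has constant coefficient equal to 1. Then F = Σ_{m≥0} ((km)!/(m!)^k)·X^m; i.e. the hypergeometric equation θ^k F = X·∏_{j=1}^k (kθ+j) F has a unique formal power series solution with constant term 1, namely Σ_{m≥0} ((km)!/(m!)^k)·X^m. -/
/-!
The Euler operator `θ = X d/dX` acts diagonally on monomials, `θ Xⁿ = n Xⁿ`, so comparing the
coefficients of `X^(n+1)` in the equation gives the recurrence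
`(n+1)^k a(n+1) = (kn+1)(kn+2)⋯(kn+k) a(n)`. Since `(n+1)^k ≠ 0`, the constant term determines
every coefficient, and `(km)! / (m!)^k` satisfies the same recurrence with the same initial value.
-/

open PowerSeries Finset

namespace PowerSeries

variable {R : Type*} [CommSemiring R]

theorem coeff_X_mul_derivative (f : R⟦X⟧) (n : ℕ) :
    coeff n (X * derivative R f) = n * coeff n f := by
  cases n with
  | zero => simp
  | succ n => rw [coeff_succ_X_mul, coeff_derivative, mul_comm]; push_cast; rfl

theorem coeff_iterate_X_mul_derivative (m n : ℕ) (f : R⟦X⟧) :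
    coeff n ((fun g => X * derivative R g)^[m] f) = (n : R) ^ m * coeff n f := by
  induction m with
  | zero => simp
  | succ m ih => rw [Function.iterate_succ_apply', coeff_X_mul_derivative, ih, pow_succ', mul_assoc]

theorem coeff_foldr_X_mul_derivative (c : R) (l : List R) (f : R⟦X⟧) (n : ℕ) :
    coeff n (l.foldr (fun j g => c • (X * derivative R g) + (j + 1) • g) f) =
      (l.map fun j => c * n + j + 1).prod * coeff n f := by
  induction l with
  | nil => simp
  | cons j l ih =>
    simp only [List.foldr_cons, List.map_cons, List.prod_cons, map_add, map_smul, smul_eq_mul,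
      coeff_X_mul_derivative, ih]
    ring

end PowerSeries

theorem Nat.cast_factorial_add_eq_prod_mul {S : Type*} [CommSemiring S] (n k : ℕ) :
    ((n + k).factorial : S) = (∏ j ∈ range k, ((n : S) + j + 1)) * n.factorial := by
  rw [← Nat.factorial_mul_ascFactorial, Nat.ascFactorial_eq_prod_range, mul_comm]
  push_cast
  simp only [add_right_comm]

theorem succ_pow_mul_factorial_mul_div_pow {K : Type*} [Field K] [CharZero K] (k n : ℕ) :
    ((n : K) + 1) ^ k * ((k * (n + 1)).factorial / ((n + 1).factorial : K) ^ k) =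
      (∏ j ∈ range k, ((k : K) * n + j + 1)) * ((k * n).factorial / (n.factorial : K) ^ k) := by
  have hn : (n.factorial : K) ≠ 0 := Nat.cast_ne_zero.mpr n.factorial_ne_zero
  rw [mul_add_one, Nat.cast_factorial_add_eq_prod_mul, Nat.factorial_succ]
  push_cast
  field_simp
  rw [mul_pow]
  ring

theorem stmt14_general (k : ℕ)
    (θ : PowerSeries ℚ → PowerSeries ℚ)
    (hθ : ∀ G, θ G = PowerSeries.X * PowerSeries.derivative ℚ G)
    (F : PowerSeries ℚ)
    (heq : θ^[k] F =
      PowerSeries.X *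
        (List.range k).foldr (fun j G => (k : ℚ) • θ G + ((j : ℚ) + 1) • G) F)
    (hconst : PowerSeries.constantCoeff F = 1) :
    F = PowerSeries.mk fun m => ((k * m).factorial : ℚ) / ((m.factorial : ℚ) ^ k) := by
  obtain rfl : θ = fun G => X * derivative ℚ G := funext hθ
  have hrec (n : ℕ) : ((n : ℚ) + 1) ^ k * coeff (n + 1) F =
      (∏ j ∈ range k, ((k : ℚ) * n + j + 1)) * coeff n F := by
    have h := congrArg (coeff (n + 1)) heq
    -- the fold runs over `List.range k` coerced to `List ℚ` through the list monad
    rw [coeff_iterate_X_mul_derivative, coeff_succ_X_mul, bind_pure_comp, List.map_eq_map,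
      coeff_foldr_X_mul_derivative, List.map_map] at h
    push_cast at h
    exact h
  ext n
  rw [coeff_mk]
  induction n with
  | zero => simpa using hconst
  | succ n ih =>
    apply mul_left_cancel₀ (pow_ne_zero k n.cast_add_one_ne_zero)
    rw [hrec, ih, succ_pow_mul_factorial_mul_div_pow]

/-- The hypergeometric equation `θ^k F = X * (kθ+1)(kθ+2)⋯(kθ+k) F`
(`θ G = X * G'`) has a unique formal power series solution with constant term `1`,
namely `F = Σ_{m ≥ 0} ((km)!/(m!)^k) X^m`. -/
theorem stmt14 (k : ℕ) (hk : 1 ≤ k)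
    (θ : PowerSeries ℚ → PowerSeries ℚ)
    (hθ : ∀ G, θ G = PowerSeries.X * PowerSeries.derivative ℚ G)
    (F : PowerSeries ℚ)
    (heq : θ^[k] F =
      PowerSeries.X *
        (List.range k).foldr (fun j G => (k : ℚ) • θ G + ((j : ℚ) + 1) • G) F)
    (hconst : PowerSeries.constantCoeff F = 1) :
    F = PowerSeries.mk fun m => ((k * m).factorial : ℚ) / ((m.factorial : ℚ) ^ k) :=
  stmt14_general k θ hθ F heq hconst
end
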